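/- Let r be a positive integer and define the projection P sending a sequence z̃ (defined on multi-indices of length ≤ 4r) to P(z̃) with P(z̃)_α = z̃_{2α} for all multi-indices α of length ≤ 2r. If z̃ is feasible for the level-2r Putinar moment relaxation (P-DGW-2r), then P(z̃) is feasible for the level-r Schmüdgen moment relaxation (S-DGW-r), and ∑_{i,k,j,l} L_{ij,kl} z̃_{2δ_{ij}+2δ_{kl}} = ∑_{i,k,j,l} L_{ij,kl} P(z̃)_{δ_{ij}+δ_{kl}}; consequently val(S-DGW-r) ≤ val(P-DGW-2r). -/

import Mathlib

open MvPolynomial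

/-- The Riesz functional associated to a moment sequence `z`. -/
noncomputable def riesz {σ : Type*} (z : (σ →₀ ℕ) → ℝ) (p : MvPolynomial σ ℝ) : ℝ :=
  ∑ α ∈ p.support, MvPolynomial.coeff α p * z α

/-- The total degree (length) of a multi-index. -/
def mdeg {σ : Type*} (α : σ →₀ ℕ) : ℕ := α.sum fun _ e => e

/-- Positive semidefiniteness of the truncated localizing matrix `M_t(g z)`:
the associated quadratic form is nonnegative on coefficient vectors of
polynomials of degree at most `t`. -/
def locPSD {σ : Type*} (z : (σ →₀ ℕ) → ℝ) (g : MvPolynomial σ ℝ) (t : ℕ) : Prop :=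
  ∀ p : MvPolynomial σ ℝ, p.totalDegree ≤ t → 0 ≤ riesz z (g * p ^ 2)

/-- Vanishing of the truncated localizing matrix `M_t(g z)`: all entries are zero. -/
def locZero {σ : Type*} (z : (σ →₀ ℕ) → ℝ) (g : MvPolynomial σ ℝ) (t : ℕ) : Prop :=
  ∀ α β : σ →₀ ℕ, mdeg α ≤ t → mdeg β ≤ t →
    riesz z (g * monomial α 1 * monomial β 1) = 0

/-- The row-marginal polynomial `r_i(π) = ∑_j π_{ij} - μ_i`. -/
noncomputable def rowPoly (a b : ℕ) (μ : Fin a → ℝ) (i : Fin a) :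
    MvPolynomial (Fin a × Fin b) ℝ :=
  (∑ j, X (i, j)) - C (μ i)

/-- The column-marginal polynomial `c_j(π) = ∑_i π_{ij} - ν_j`. -/
noncomputable def colPoly (a b : ℕ) (ν : Fin b → ℝ) (j : Fin b) :
    MvPolynomial (Fin a × Fin b) ℝ :=
  (∑ i, X (i, j)) - C (ν j)

/-- The monomial `e_I = ∏_{(i,j) ∈ I} π_{ij}`. -/
noncomputable def eI {a b : ℕ} (I : Finset (Fin a × Fin b)) : MvPolynomial (Fin a × Fin b) ℝ :=
  ∏ q ∈ I, X q

/-- A probability vector: nonnegative entries summing to 1. -/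
def IsProbVec {a : ℕ} (μ : Fin a → ℝ) : Prop := (∀ i, 0 ≤ μ i) ∧ ∑ i, μ i = 1

/-- Feasibility for the level-`r` Schmüdgen moment relaxation (S-DGW-r). -/
def SFeas (a b r : ℕ) (μ : Fin a → ℝ) (ν : Fin b → ℝ)
    (z : ((Fin a × Fin b) →₀ ℕ) → ℝ) : Prop :=
  z 0 = 1 ∧
  (∀ I : Finset (Fin a × Fin b), I.card ≤ 2 * r → locPSD z (eI I) (r - (I.card + 1) / 2)) ∧
  (∀ i, locZero z (rowPoly a b μ i) (r - 1)) ∧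
  (∀ j, locZero z (colPoly a b ν j) (r - 1)) ∧
  (∀ i₁ i₂ : Fin a, ∀ j : Fin b, locZero z (rowPoly a b μ i₁ * X (i₂, j)) (r - 1)) ∧
  (∀ j₁ j₂ : Fin b, ∀ i : Fin a, locZero z (colPoly a b ν j₁ * X (i, j₂)) (r - 1))

/-- The objective of the Schmüdgen moment relaxation. -/
noncomputable def objS (a b : ℕ) (L : Fin a → Fin b → Fin a → Fin b → ℝ)
    (z : ((Fin a × Fin b) →₀ ℕ) → ℝ) : ℝ :=
  ∑ i, ∑ j, ∑ k, ∑ l, L i j k l * z (Finsupp.single (i, j) 1 + Finsupp.single (k, l) 1)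

/-- The optimal value of the level-`r` Schmüdgen moment relaxation. -/
noncomputable def valS (a b r : ℕ) (μ : Fin a → ℝ) (ν : Fin b → ℝ)
    (L : Fin a → Fin b → Fin a → Fin b → ℝ) : ℝ :=
  sInf {v : ℝ | ∃ z, SFeas a b r μ ν z ∧ v = objS a b L z}

/-- Feasibility for the level-`s` Putinar moment relaxation (P-DGW-s), in squared variables. -/
def PFeas (a b s : ℕ) (μ : Fin a → ℝ) (ν : Fin b → ℝ)
    (z : ((Fin a × Fin b) →₀ ℕ) → ℝ) : Prop :=
  z 0 = 1 ∧ locPSD z 1 s ∧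
  (∀ i, locZero z (C (μ i) - ∑ j, X (i, j) ^ 2) (s - 1)) ∧
  (∀ j, locZero z (C (ν j) - ∑ i, X (i, j) ^ 2) (s - 1))

/-- The objective of the Putinar moment relaxation. -/
noncomputable def objP (a b : ℕ) (L : Fin a → Fin b → Fin a → Fin b → ℝ)
    (z : ((Fin a × Fin b) →₀ ℕ) → ℝ) : ℝ :=
  ∑ i, ∑ j, ∑ k, ∑ l, L i j k l * z (Finsupp.single (i, j) 2 + Finsupp.single (k, l) 2)

/-- The optimal value of the level-`s` Putinar moment relaxation. -/
noncomputable def valP (a b s : ℕ) (μ : Fin a → ℝ) (ν : Fin b → ℝ)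
    (L : Fin a → Fin b → Fin a → Fin b → ℝ) : ℝ :=
  sInf {v : ℝ | ∃ z, PFeas a b s μ ν z ∧ v = objP a b L z}

/-!
Substituting `π_{ij} = x_{ij}²` (the algebra map `expand 2`) turns the Riesz functional of
`P(z̃)` into that of `z̃`: `L_{P z̃}(p) = L_{z̃}(p(x²))`. Under this substitution `e_I` becomes the
square `e_I(x)²`, so every Schmüdgen localizing constraint is an instance of `M_{2r}(z̃) ⪰ 0`;
`r_i` and `c_j` become the negated Putinar constraint polynomials, and the extra factor
`π_{i₂j}` becomes `x_{i₂j}²`, which is absorbed into the two multi-indices of the localizing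
matrix. For the values, the marginal constraints force every second moment of a point of
(S-DGW-r) into `[0, 1]`, so its objective is bounded below and `valS` is not the junk `sInf` of
an unbounded set.
-/

section Riesz

variable {σ : Type*} (z : (σ →₀ ℕ) → ℝ)

noncomputable def rieszLinearMap : MvPolynomial σ ℝ →ₗ[ℝ] ℝ :=
  Finsupp.linearCombination ℝ z ∘ₗ (AddMonoidAlgebra.coeffLinearEquiv ℝ).toLinearMap

theorem rieszLinearMap_apply (p : MvPolynomial σ ℝ) : rieszLinearMap z p = riesz z p := by
  simp only [rieszLinearMap, LinearMap.coe_comp, Function.comp_apply, LinearEquiv.coe_coe,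
    Finsupp.linearCombination_apply, riesz, Finsupp.sum, smul_eq_mul]
  rfl

theorem riesz_add (p q : MvPolynomial σ ℝ) : riesz z (p + q) = riesz z p + riesz z q := by
  simp only [← rieszLinearMap_apply, map_add]

theorem riesz_sub (p q : MvPolynomial σ ℝ) : riesz z (p - q) = riesz z p - riesz z q := by
  simp only [← rieszLinearMap_apply, map_sub]

theorem riesz_sum {ι : Type*} (s : Finset ι) (f : ι → MvPolynomial σ ℝ) :
    riesz z (∑ i ∈ s, f i) = ∑ i ∈ s, riesz z (f i) := by
  simp only [← rieszLinearMap_apply, map_sum]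

theorem riesz_C_mul (c : ℝ) (p : MvPolynomial σ ℝ) : riesz z (C c * p) = c * riesz z p := by
  simp only [← smul_eq_C_mul, ← rieszLinearMap_apply, map_smul, smul_eq_mul]

theorem riesz_monomial (α : σ →₀ ℕ) (c : ℝ) : riesz z (monomial α c) = c * z α := by
  rw [← rieszLinearMap_apply]
  change Finsupp.linearCombination ℝ z (Finsupp.single α c) = _
  rw [Finsupp.linearCombination_single, smul_eq_mul]

theorem riesz_X (s : σ) : riesz z (X s) = z (Finsupp.single s 1) := by
  rw [X, riesz_monomial, one_mul]

theorem riesz_expand_two (p : MvPolynomial σ ℝ) :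
    riesz (fun α => z (α + α)) p = riesz z (expand 2 p) := by
  induction p using MvPolynomial.induction_on' with
  | monomial α c => rw [expand_monomial, two_nsmul, riesz_monomial, riesz_monomial]
  | add p q hp hq => rw [riesz_add, map_add, riesz_add, hp, hq]

end Riesz

theorem mdeg_eq_degree {σ : Type*} (α : σ →₀ ℕ) : mdeg α = α.degree := rfl

theorem monomial_add_one {σ R : Type*} [CommSemiring R] (α β : σ →₀ ℕ) :
    monomial (α + β) (1 : R) = monomial α 1 * monomial β 1 := by
  rw [monomial_mul, mul_one]

section Doubling

variable {σ : Type*} {zt : (σ →₀ ℕ) → ℝ} {s t : ℕ}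

theorem locPSD_expand_two {g q : MvPolynomial σ ℝ} (hz : locPSD zt 1 s)
    (hg : expand 2 g = q ^ 2) (hdeg : q.totalDegree + 2 * t ≤ s) :
    locPSD (fun α => zt (α + α)) g t := by
  intro p hp
  rw [riesz_expand_two, map_mul, map_pow, hg, ← mul_pow, ← one_mul ((q * _) ^ 2)]
  refine hz _ ((totalDegree_mul _ _).trans ?_)
  rw [totalDegree_expand]
  omega

theorem locZero_expand_two {g h : MvPolynomial σ ℝ} {c : ℝ} {γ : σ →₀ ℕ}
    (hz : locZero zt h s) (hg : expand 2 g = C c * h * monomial (γ + γ) 1)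
    (hdeg : mdeg γ + 2 * t ≤ s) : locZero (fun α => zt (α + α)) g t := by
  intro α β hα hβ
  have hsplit : expand 2 (g * monomial α 1 * monomial β 1)
      = C c * (h * monomial (γ + (α + α)) 1 * monomial (γ + (β + β)) 1) := by
    simp only [map_mul, hg, expand_monomial, two_nsmul, monomial_add_one]
    ring
  have hdeg' : ∀ δ : σ →₀ ℕ, mdeg δ ≤ t → mdeg (γ + (δ + δ)) ≤ s := fun δ hδ => by
    simp only [mdeg_eq_degree, map_add] at hδ hdeg ⊢
    omega
  rw [riesz_expand_two, hsplit, riesz_C_mul, hz _ _ (hdeg' α hα) (hdeg' β hβ), mul_zero]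

end Doubling

section ConstraintPolynomials

variable {a b : ℕ}

theorem expand_two_eI (I : Finset (Fin a × Fin b)) : expand 2 (eI I) = eI I ^ 2 := by
  simp only [eI, map_prod, expand_X, Finset.prod_pow]

theorem eI_eq_monomial (I : Finset (Fin a × Fin b)) :
    eI I = monomial (∑ q ∈ I, Finsupp.single q 1) 1 := by
  simp only [eI, monomial_sum_one, X]

theorem totalDegree_eI_le (I : Finset (Fin a × Fin b)) : (eI I).totalDegree ≤ I.card :=
  (totalDegree_finsetProd _ _).trans (by simp [totalDegree_X])

theorem expand_two_rowPoly (μ : Fin a → ℝ) (i : Fin a) :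
    expand 2 (rowPoly a b μ i) = C (-1) * (C (μ i) - ∑ j, X (i, j) ^ 2) := by
  simp only [rowPoly, map_sub, map_sum, expand_X, expand_C, map_neg, C_1]
  ring

theorem expand_two_colPoly (ν : Fin b → ℝ) (j : Fin b) :
    expand 2 (colPoly a b ν j) = C (-1) * (C (ν j) - ∑ i, X (i, j) ^ 2) := by
  simp only [colPoly, map_sub, map_sum, expand_X, expand_C, map_neg, C_1]
  ring

end ConstraintPolynomials

section Transfer

variable {a b r : ℕ} {μ : Fin a → ℝ} {ν : Fin b → ℝ}

theorem PFeas.sFeas_double (hr : 0 < r) {zt : ((Fin a × Fin b) →₀ ℕ) → ℝ}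
    (hzt : PFeas a b (2 * r) μ ν zt) : SFeas a b r μ ν (fun α => zt (α + α)) := by
  obtain ⟨h0, hpsd, hrow, hcol⟩ := hzt
  have hsq (q : Fin a × Fin b) : Finsupp.single q 1 + Finsupp.single q 1 = Finsupp.single q 2 :=
    (Finsupp.single_add q 1 1).symm
  have hmdeg (q : Fin a × Fin b) : mdeg (Finsupp.single q 1) = 1 := Finsupp.degree_single q 1
  refine ⟨by simpa using h0, fun I hI => ?_, fun i => ?_, fun j => ?_, fun i₁ i₂ j => ?_,
    fun j₁ j₂ i => ?_⟩
  · refine locPSD_expand_two hpsd (expand_two_eI I) ?_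
    have := totalDegree_eI_le I
    omega
  · refine locZero_expand_two (hrow i) (c := -1) (γ := 0) ?_ (by simp [mdeg_eq_degree]; omega)
    rw [expand_two_rowPoly, add_zero, monomial_zero', C_1, mul_one]
  · refine locZero_expand_two (hcol j) (c := -1) (γ := 0) ?_ (by simp [mdeg_eq_degree]; omega)
    rw [expand_two_colPoly, add_zero, monomial_zero', C_1, mul_one]
  · refine locZero_expand_two (hrow i₁) (c := -1) (γ := Finsupp.single (i₂, j) 1) ?_
      (by rw [hmdeg]; omega)
    rw [map_mul, expand_two_rowPoly, expand_X, X_pow_eq_monomial, hsq]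
  · refine locZero_expand_two (hcol j₁) (c := -1) (γ := Finsupp.single (i, j₂) 1) ?_
      (by rw [hmdeg]; omega)
    rw [map_mul, expand_two_colPoly, expand_X, X_pow_eq_monomial, hsq]

end Transfer

theorem objP_eq_objS_double {a b : ℕ} (L : Fin a → Fin b → Fin a → Fin b → ℝ)
    (zt : ((Fin a × Fin b) →₀ ℕ) → ℝ) : objP a b L zt = objS a b L (fun α => zt (α + α)) := by
  simp only [objP, objS, add_add_add_comm, ← Finsupp.single_add]

theorem IsProbVec.le_one {a : ℕ} {μ : Fin a → ℝ} (hμ : IsProbVec μ) (i : Fin a) : μ i ≤ 1 :=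
  hμ.2 ▸ Finset.single_le_sum (fun j _ => hμ.1 j) (Finset.mem_univ i)

namespace SFeas

variable {a b r : ℕ} {μ : Fin a → ℝ} {ν : Fin b → ℝ} {z : ((Fin a × Fin b) →₀ ℕ) → ℝ}

theorem zero_le_moment_eI (hz : SFeas a b r μ ν z) {I : Finset (Fin a × Fin b)}
    (hI : I.card ≤ 2 * r) : 0 ≤ z (∑ q ∈ I, Finsupp.single q 1) := by
  obtain ⟨-, hpsd, -⟩ := hz
  simpa [eI_eq_monomial, riesz_monomial] using hpsd I hI 1 (by simp)

theorem zero_le_moment_single (hz : SFeas a b r μ ν z) (hr : 0 < r) (p : Fin a × Fin b) :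
    0 ≤ z (Finsupp.single p 1) := by
  simpa using hz.zero_le_moment_eI (I := {p}) (by simp; omega)

theorem zero_le_moment_pair (hz : SFeas a b r μ ν z) (hr : 0 < r) (p q : Fin a × Fin b) :
    0 ≤ z (Finsupp.single p 1 + Finsupp.single q 1) := by
  obtain rfl | hpq := eq_or_ne p q
  · obtain ⟨-, hpsd, -⟩ := hz
    have h := hpsd ∅ (by simp) (X p) (by simp [totalDegree_X]; omega)
    rwa [eI, Finset.prod_empty, one_mul, X, sq, monomial_mul, mul_one, riesz_monomial,
      one_mul] at h
  · simpa [Finset.sum_pair hpq] using hz.zero_le_moment_eI (I := {p, q})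
      (by rw [Finset.card_pair hpq]; omega)

theorem sum_row_moment (hz : SFeas a b r μ ν z) (i : Fin a) (p : Fin a × Fin b) :
    ∑ j, z (Finsupp.single (i, j) 1 + Finsupp.single p 1) = μ i * z (Finsupp.single p 1) := by
  obtain ⟨-, -, -, -, hrowX, -⟩ := hz
  have h := hrowX i p.1 p.2 0 0 (by simp [mdeg_eq_degree]) (by simp [mdeg_eq_degree])
  simp only [monomial_zero', C_1, mul_one, rowPoly, sub_mul, Finset.sum_mul, riesz_sub,
    riesz_sum, riesz_C_mul, X, monomial_mul, riesz_monomial, one_mul] at h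
  linarith

theorem sum_col_moment (hz : SFeas a b r μ ν z) (l : Fin b) :
    ∑ i, z (Finsupp.single (i, l) 1) = ν l := by
  obtain ⟨h0, -, -, hcol, -⟩ := hz
  have h := hcol l 0 0 (by simp [mdeg_eq_degree]) (by simp [mdeg_eq_degree])
  simp only [monomial_zero', C_1, mul_one, colPoly, riesz_sub, riesz_sum, riesz_X] at h
  rw [← monomial_zero', riesz_monomial, h0, mul_one] at h
  linarith

theorem moment_pair_le_one (hz : SFeas a b r μ ν z) (hr : 0 < r) (hμ : IsProbVec μ)
    (hν : IsProbVec ν) (i : Fin a) (j : Fin b) (k : Fin a) (l : Fin b) :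
    z (Finsupp.single (i, j) 1 + Finsupp.single (k, l) 1) ≤ 1 := calc
  _ ≤ ∑ j', z (Finsupp.single (i, j') 1 + Finsupp.single (k, l) 1) :=
    Finset.single_le_sum (fun j' _ => hz.zero_le_moment_pair hr _ _) (Finset.mem_univ j)
  _ = μ i * z (Finsupp.single (k, l) 1) := hz.sum_row_moment i (k, l)
  _ ≤ 1 * ν l := by
    refine mul_le_mul (hμ.le_one i) ?_ (hz.zero_le_moment_single hr _) zero_le_one
    rw [← hz.sum_col_moment l]
    exact Finset.single_le_sum (fun i' _ => hz.zero_le_moment_single hr (i', l))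
      (Finset.mem_univ k)
  _ ≤ 1 := by rw [one_mul]; exact hν.le_one l

theorem neg_sum_abs_le_objS (hz : SFeas a b r μ ν z) (hr : 0 < r) (hμ : IsProbVec μ)
    (hν : IsProbVec ν) (L : Fin a → Fin b → Fin a → Fin b → ℝ) :
    -∑ i, ∑ j, ∑ k, ∑ l, |L i j k l| ≤ objS a b L z := by
  simp only [objS, ← Finset.sum_neg_distrib]
  gcongr with i _ j _ k _ l _
  have h0 := hz.zero_le_moment_pair hr (i, j) (k, l)
  have h1 := hz.moment_pair_le_one hr hμ hν i j k l
  calc -|L i j k l| ≤ -|L i j k l| * z (Finsupp.single (i, j) 1 + Finsupp.single (k, l) 1) := by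
        nlinarith [abs_nonneg (L i j k l)]
    _ ≤ _ := mul_le_mul_of_nonneg_right (neg_abs_le _) h0

end SFeas

theorem bddBelow_objS {a b r : ℕ} {μ : Fin a → ℝ} {ν : Fin b → ℝ} (hr : 0 < r)
    (hμ : IsProbVec μ) (hν : IsProbVec ν) (L : Fin a → Fin b → Fin a → Fin b → ℝ) :
    BddBelow {v : ℝ | ∃ z, SFeas a b r μ ν z ∧ v = objS a b L z} :=
  ⟨_, by rintro _ ⟨z, hz, rfl⟩; exact hz.neg_sum_abs_le_objS hr hμ hν L⟩

theorem stmt1_general (m n r : ℕ) (hr : 0 < r)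
    (μ : Fin m → ℝ) (ν : Fin n → ℝ) (hμ : IsProbVec μ) (hν : IsProbVec ν)
    (L : Fin m → Fin n → Fin m → Fin n → ℝ)
    (zt : ((Fin m × Fin n) →₀ ℕ) → ℝ) (hzt : PFeas m n (2 * r) μ ν zt) :
    SFeas m n r μ ν (fun α => zt (α + α)) ∧
    objP m n L zt = objS m n L (fun α => zt (α + α)) ∧
    valS m n r μ ν L ≤ valP m n (2 * r) μ ν L := by
  refine ⟨hzt.sFeas_double hr, objP_eq_objS_double L zt, ?_⟩
  refine le_csInf ⟨_, zt, hzt, rfl⟩ ?_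
  rintro _ ⟨z, hz, rfl⟩
  rw [objP_eq_objS_double]
  exact csInf_le (bddBelow_objS hr hμ hν L) ⟨_, hz.sFeas_double hr, rfl⟩

/-- The projection `P(z̃)_α = z̃_{2α}` maps feasible points of (P-DGW-2r)
to feasible points of (S-DGW-r), preserving the objective value; consequently
val(S-DGW-r) ≤ val(P-DGW-2r). -/
theorem stmt1 (m n r : ℕ) (hm : 0 < m) (hn : 0 < n) (hr : 0 < r)
    (μ : Fin m → ℝ) (ν : Fin n → ℝ) (hμ : IsProbVec μ) (hν : IsProbVec ν)
    (L : Fin m → Fin n → Fin m → Fin n → ℝ)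
    (zt : ((Fin m × Fin n) →₀ ℕ) → ℝ) (hzt : PFeas m n (2 * r) μ ν zt) :
    SFeas m n r μ ν (fun α => zt (α + α)) ∧
    objP m n L zt = objS m n L (fun α => zt (α + α)) ∧
    valS m n r μ ν L ≤ valP m n (2 * r) μ ν L :=
  stmt1_general m n r hr μ ν hμ hν L zt hzt
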